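/- arXiv:1104.4860 — 5 statements merged into one kernel-verified Lean document; each statement's English description precedes it below -/
import Mathlib

section
/- For i ∈ ω and ε ∈ {0,1}, set C^ε_i := N_{0^{2i+ε}1} ⊆ 2^ω and A₁ := ⋃_i C⁰_i × C¹_i = {(0^{2i}1α, 0^{2i+1}1β) : i ∈ ω, α,β ∈ 2^ω}. Then there is no continuous map c: 2^ω → ω such that c(x) ≠ c(y) whenever (x,y) ∈ A₁. -/
/-- Concatenation of a finite binary sequence with an infinite one. -/
def cat (u : List Bool) (γ : ℕ → Bool) : ℕ → Bool :=
  fun n => u.getD n (γ (n - u.length))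

/-- `0^{2i+ε}1γ` generators: `A₁ = {(0^{2i}1α, 0^{2i+1}1β) : i, α, β}`. -/
def A1 : Set ((ℕ → Bool) × (ℕ → Bool)) :=
  {p | ∃ i α β, p = (cat (List.replicate (2 * i) false ++ [true]) α,
                     cat (List.replicate (2 * i + 1) false ++ [true]) β)}

lemma cat_zeros (m n : ℕ) (hn : n < m) (γ : ℕ → Bool) :
    cat (List.replicate m false ++ [true]) γ n = false := by
  have hlen : n < (List.replicate m false ++ [true]).length := by
    simp; omega
  have : cat (List.replicate m false ++ [true]) γ n
      = (List.replicate m false ++ [true])[n] := by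
    simp [cat, List.getD_eq_getElem _ _ hlen, List.getElem?_eq_getElem hlen]
  rw [this, List.getElem_append_left (by simpa using hn)]
  simp

/-- there is no continuous countable coloring of `(2^ω, A₁)`. -/
theorem stmt2 {X : Type*} [TopologicalSpace X] [PolishSpace X]
    (A : Set (X × X)) (hA : ∀ x, (x, x) ∉ A) :
    ¬ ∃ c : (ℕ → Bool) → ℕ, Continuous c ∧ ∀ p ∈ A1, c p.1 ≠ c p.2 := by
  rintro ⟨c, hc, hcol⟩
  set z : ℕ → Bool := fun _ => false with hz
  have hopen : IsOpen (c ⁻¹' {c z}) := hc.isOpen_preimage _ (isOpen_discrete _)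
  obtain ⟨I, u, hu, hsub⟩ := (isOpen_pi_iff.mp hopen) z rfl
  -- choose i so that 2*i is above all of I
  obtain ⟨N, hN⟩ : ∃ N, ∀ n ∈ I, n < N := ⟨(I.sup id) + 1, fun n hn =>
    Nat.lt_succ_of_le (Finset.le_sup (f := id) hn)⟩
  set x := cat (List.replicate (2 * N) false ++ [true]) z
  set y := cat (List.replicate (2 * N + 1) false ++ [true]) z
  have hxmem : x ∈ c ⁻¹' {c z} := by
    apply hsub
    intro n hn
    have : x n = false := cat_zeros _ _ (by have := hN n hn; omega) z
    rw [this]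
    exact (hu n hn).2
  have hymem : y ∈ c ⁻¹' {c z} := by
    apply hsub
    intro n hn
    have : y n = false := cat_zeros _ _ (by have := hN n hn; omega) z
    rw [this]
    exact (hu n hn).2
  have hedge : (x, y) ∈ A1 := ⟨N, z, z, rfl⟩
  exact hcol _ hedge (by simp_all)
end

section
/- Let 𝕏 be a zero-dimensional Polish space, (C^ε_i)_{(ε,i)∈2×ω} a family of pairwise disjoint clopen subsets of 𝕏 such that 𝕏 ∖ ⋃_{ε,i} C^ε_i ≠ ∅ and no clopen set meeting 𝕏 ∖ ⋃_{ε,i} C^ε_i is (⋃_i C⁰_i × C¹_i)-discrete. Then there is no continuous countable coloring of (𝕏, ⋃_i C⁰_i × C¹_i): no continuous c: 𝕏 → ω satisfies c(x) ≠ c(y) for all (x,y) ∈ ⋃_i C⁰_i × C¹_i. -/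
theorem stmt4_general {𝕏 : Type*} [TopologicalSpace 𝕏]
    (C : Bool → ℕ → Set 𝕏)
    (hne : (Set.univ \ ⋃ ε, ⋃ i, C ε i).Nonempty)
    (hnd : ∀ D : Set 𝕏, IsClopen D → (D ∩ (Set.univ \ ⋃ ε, ⋃ i, C ε i)).Nonempty →
      ∃ x ∈ D, ∃ y ∈ D, ∃ i, x ∈ C false i ∧ y ∈ C true i) :
    ¬ ∃ c : 𝕏 → ℕ, Continuous c ∧
      ∀ x y, (∃ i, x ∈ C false i ∧ y ∈ C true i) → c x ≠ c y := by
  rintro ⟨c, hc, hcol⟩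
  obtain ⟨x₀, hx₀⟩ := hne
  have hfibre : IsClopen (c ⁻¹' {c x₀}) := (isClopen_discrete _).preimage hc
  obtain ⟨x, hx, y, hy, hxy⟩ := hnd _ hfibre ⟨x₀, rfl, hx₀⟩
  exact hcol x y hxy (hx.trans hy.symm)

/-- if `(C^ε_i)` is a pairwise disjoint family of clopen subsets of
a zero-dimensional Polish space `𝕏` with nonempty "remainder"
`𝕏 ∖ ⋃ C^ε_i`, and no clopen set meeting the remainder is
`(⋃_i C⁰_i × C¹_i)`-discrete, then `(𝕏, ⋃_i C⁰_i × C¹_i)` has no continuous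
countable coloring. -/
theorem stmt4 {𝕏 : Type*} [TopologicalSpace 𝕏] [PolishSpace 𝕏]
    (hbasis : TopologicalSpace.IsTopologicalBasis {s : Set 𝕏 | IsClopen s})
    (C : Bool → ℕ → Set 𝕏) (hclopen : ∀ ε i, IsClopen (C ε i))
    (hdisj : ∀ ε i ε' i', (ε, i) ≠ (ε', i') → Disjoint (C ε i) (C ε' i'))
    (hne : (Set.univ \ ⋃ ε, ⋃ i, C ε i).Nonempty)
    (hnd : ∀ D : Set 𝕏, IsClopen D → (D ∩ (Set.univ \ ⋃ ε, ⋃ i, C ε i)).Nonempty →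
      ∃ x ∈ D, ∃ y ∈ D, ∃ i, x ∈ C false i ∧ y ∈ C true i) :
    ¬ ∃ c : 𝕏 → ℕ, Continuous c ∧
      ∀ x y, (∃ i, x ∈ C false i ∧ y ∈ C true i) → c x ≠ c y :=
  stmt4_general C hne hnd
end

section
/- Let 𝕏 be a zero-dimensional Polish space, (C^ε_i)_{(ε,i)∈2×ω} a family of pairwise disjoint clopen subsets of 𝕏, X a zero-dimensional Polish space, and A a relation on X. Then either (a) there is a continuous map c: X → ω with c(x) ≠ c(y) for all (x,y) ∈ A, or (b) there is a continuous map f: 𝕏 → X such that (f(y), f(z)) ∈ A whenever (y,z) ∈ ⋃_i C⁰_i × C¹_i. -/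
/-!
If some point `p` has `(p, p)` in the closure of `A`, pick edges `(aᵢ, bᵢ) ∈ A` converging to
`(p, p)` and send `C⁰ᵢ` to `aᵢ`, `C¹ᵢ` to `bᵢ` and everything else to `p`: this is continuous
because any point outside all the `Cᵋᵢ` has a neighbourhood avoiding the finitely many of them
whose value lies outside a given neighbourhood of `p`. Otherwise every point has a clopen
neighbourhood containing no edge of `A`; countably many of them cover `X`, and colouring each
point by the first of these sets containing it is continuous.
-/

open Filter Function Topology Set TopologicalSpace

section Gluing

variable {Y X ι : Type*} {D : ι → Set Y} {u : ι → X} {p : X} {y : Y}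

open Classical in
noncomputable def piecewiseConst (D : ι → Set Y) (u : ι → X) (p : X) (y : Y) : X :=
  if h : ∃ i, y ∈ D i then u h.choose else p

theorem piecewiseConst_of_mem (hD : Pairwise (Disjoint on D)) {i : ι} (hy : y ∈ D i) :
    piecewiseConst D u p y = u i := by
  have h : ∃ i, y ∈ D i := ⟨i, hy⟩
  rw [piecewiseConst, dif_pos h, hD.eq (not_disjoint_iff.mpr ⟨y, h.choose_spec, hy⟩)]

theorem piecewiseConst_of_forall_notMem (hy : ∀ i, y ∉ D i) : piecewiseConst D u p y = p := by
  rw [piecewiseConst, dif_neg (not_exists.mpr hy)]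

variable [TopologicalSpace Y] [TopologicalSpace X]

theorem continuous_piecewiseConst (hD : Pairwise (Disjoint on D)) (hclopen : ∀ i, IsClopen (D i))
    (hu : Tendsto u cofinite (𝓝 p)) : Continuous (piecewiseConst D u p) := by
  rw [continuous_iff_continuousAt]
  intro y
  by_cases hy : ∃ i, y ∈ D i
  · obtain ⟨i, hi⟩ := hy
    have hconst : piecewiseConst D u p =ᶠ[𝓝 y] fun _ => u i :=
      eventually_of_mem ((hclopen i).isOpen.mem_nhds hi) fun z hz => piecewiseConst_of_mem hD hz
    exact continuousAt_const.congr hconst.symm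
  · push Not at hy
    rw [ContinuousAt, piecewiseConst_of_forall_notMem hy]
    refine tendsto_def.mpr fun W hW => ?_
    have hfin : {i | u i ∉ W}.Finite := hu hW
    have hfar : ∀ᶠ z in 𝓝 y, ∀ i ∈ {i | u i ∉ W}, z ∉ D i :=
      (eventually_all_finite hfin).mpr fun i _ => (hclopen i).isClosed.compl_mem_nhds (hy i)
    filter_upwards [hfar] with z hz
    by_cases hz' : ∃ i, z ∈ D i
    · obtain ⟨i, hi⟩ := hz'
      rw [mem_preimage, piecewiseConst_of_mem hD hi]
      by_contra h
      exact hz i h hi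
    · rw [mem_preimage, piecewiseConst_of_forall_notMem (not_exists.mp hz')]
      exact mem_of_mem_nhds hW

theorem exists_continuous_hom_of_mem_closure [FirstCountableTopology X] {A : Set (X × X)}
    (hp : (p, p) ∈ closure A) (C : Bool → ℕ → Set Y) (hclopen : ∀ ε i, IsClopen (C ε i))
    (hdisj : Pairwise (Disjoint on fun q : Bool × ℕ => C q.1 q.2)) :
    ∃ f : Y → X, Continuous f ∧
      ∀ y z, (∃ i, y ∈ C false i ∧ z ∈ C true i) → (f y, f z) ∈ A := by
  obtain ⟨s, hsA, hs⟩ := mem_closure_iff_seq_limit.mp hp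
  let u : Bool × ℕ → X := fun q => bif q.1 then (s q.2).2 else (s q.2).1
  have hu : Tendsto u cofinite (𝓝 p) := by
    -- the cofinite filter on `Bool × ℕ` is `comap Prod.snd atTop`
    rw [← coprod_cofinite, cofinite_eq_bot, bot_coprod, Nat.cofinite_eq_atTop]
    intro W hW
    exact ⟨_, hs (prod_mem_nhds hW hW), fun ⟨ε, i⟩ hi => by cases ε; exacts [hi.1, hi.2]⟩
  refine ⟨piecewiseConst _ u p, continuous_piecewiseConst hdisj (fun q => hclopen _ _) hu, ?_⟩
  rintro y z ⟨i, hy, hz⟩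
  rw [piecewiseConst_of_mem hdisj (i := (false, i)) hy,
    piecewiseConst_of_mem hdisj (i := (true, i)) hz]
  exact hsA i

end Gluing

section Coloring

variable {X : Type*} [TopologicalSpace X]

theorem exists_isClopen_prod_disjoint_of_notMem_closure
    (hX : IsTopologicalBasis {s : Set X | IsClopen s}) {A : Set (X × X)} {x : X}
    (hx : (x, x) ∉ closure A) : ∃ V, IsClopen V ∧ x ∈ V ∧ Disjoint (V ×ˢ V) A := by
  obtain ⟨U, hU, U', hU', hsub⟩ := mem_nhds_prod_iff.mp (isClosed_closure.isOpen_compl.mem_nhds hx)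
  obtain ⟨V, hV, hxV, hVU⟩ := hX.mem_nhds_iff.mp (inter_mem hU hU')
  refine ⟨V, hV, hxV, disjoint_of_subset_left ?_ (disjoint_compl_left.mono_right subset_closure)⟩
  exact (prod_mono (hVU.trans inter_subset_left) (hVU.trans inter_subset_right)).trans hsub

open Classical in
theorem continuous_natFind_of_isClopen_cover {g : ℕ → Set X} (hg : ∀ n, IsClopen (g n))
    (hcov : ∀ x, ∃ n, x ∈ g n) : Continuous fun x => Nat.find (hcov x) := by
  refine continuous_discrete_rng.mpr fun n => ?_
  have hfiber : (fun x => Nat.find (hcov x)) ⁻¹' {n} = g n ∩ ⋂ m ∈ Finset.range n, (g m)ᶜ := by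
    ext x
    simp [Nat.find_eq_iff]
  rw [hfiber]
  exact (hg n).isOpen.inter (isOpen_biInter_finset fun m _ => (hg m).isClosed.isOpen_compl)

open Classical in
theorem exists_continuous_nat_coloring [LindelofSpace X]
    (hX : IsTopologicalBasis {s : Set X | IsClopen s}) {A : Set (X × X)}
    (hA : ∀ x, (x, x) ∉ closure A) :
    ∃ c : X → ℕ, Continuous c ∧ ∀ x y, (x, y) ∈ A → c x ≠ c y := by
  rcases isEmpty_or_nonempty X with hX₀ | hX₀
  · exact ⟨fun _ => 0, continuous_const, fun x => isEmptyElim x⟩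
  choose V hV hxV hVA using fun x => exists_isClopen_prod_disjoint_of_notMem_closure hX (hA x)
  obtain ⟨t, htc, htV⟩ := countable_cover_nhds fun x => (hV x).isOpen.mem_nhds (hxV x)
  obtain ⟨z, htz⟩ := countable_iff_exists_subset_range.mp htc
  have hcov : ∀ x, ∃ n, x ∈ V (z n) := fun x => by
    obtain ⟨y, hy, hxy⟩ := mem_iUnion₂.mp (htV.symm ▸ mem_univ x)
    obtain ⟨n, rfl⟩ := htz hy
    exact ⟨n, hxy⟩
  refine ⟨fun x => Nat.find (hcov x), continuous_natFind_of_isClopen_cover (fun n => hV _) hcov,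
    fun x y hxy hc => disjoint_left.mp (hVA _) ⟨Nat.find_spec (hcov x), ?_⟩ hxy⟩
  rw [show Nat.find (hcov x) = Nat.find (hcov y) from hc]
  exact Nat.find_spec (hcov y)

end Coloring

theorem stmt5_general {𝕏 X : Type*} [TopologicalSpace 𝕏]
    [TopologicalSpace X] [PolishSpace X]
    (hX : TopologicalSpace.IsTopologicalBasis {s : Set X | IsClopen s})
    (C : Bool → ℕ → Set 𝕏) (hclopen : ∀ ε i, IsClopen (C ε i))
    (hdisj : ∀ ε i ε' i', (ε, i) ≠ (ε', i') → Disjoint (C ε i) (C ε' i'))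
    (A : Set (X × X)) :
    (∃ c : X → ℕ, Continuous c ∧ ∀ x y, (x, y) ∈ A → c x ≠ c y) ∨
    (∃ f : 𝕏 → X, Continuous f ∧
      ∀ y z, (∃ i, y ∈ C false i ∧ z ∈ C true i) → (f y, f z) ∈ A) := by
  by_cases hp : ∃ p, (p, p) ∈ closure A
  · obtain ⟨p, hp⟩ := hp
    exact Or.inr (exists_continuous_hom_of_mem_closure hp C hclopen
      fun q q' hq => hdisj q.1 q.2 q'.1 q'.2 hq)
  · push Not at hp
    exact Or.inl (exists_continuous_nat_coloring hX hp)

/-- dichotomy. Given a pairwise disjoint clopen family `(C^ε_i)` on a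
zero-dimensional Polish space `𝕏`, a zero-dimensional Polish space `X` and a
relation `A` on `X`, either `(X, A)` has a continuous countable coloring, or there
is a continuous homomorphism from `(𝕏, ⋃_i C⁰_i × C¹_i)` into `(X, A)`. -/
theorem stmt5 {𝕏 X : Type*} [TopologicalSpace 𝕏] [PolishSpace 𝕏]
    [TopologicalSpace X] [PolishSpace X]
    (h𝕏 : TopologicalSpace.IsTopologicalBasis {s : Set 𝕏 | IsClopen s})
    (hX : TopologicalSpace.IsTopologicalBasis {s : Set X | IsClopen s})
    (C : Bool → ℕ → Set 𝕏) (hclopen : ∀ ε i, IsClopen (C ε i))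
    (hdisj : ∀ ε i ε' i', (ε, i) ≠ (ε', i') → Disjoint (C ε i) (C ε' i'))
    (A : Set (X × X)) :
    (∃ c : X → ℕ, Continuous c ∧ ∀ x y, (x, y) ∈ A → c x ≠ c y) ∨
    (∃ f : 𝕏 → X, Continuous f ∧
      ∀ y z, (∃ i, y ∈ C false i ∧ z ∈ C true i) → (f y, f z) ∈ A) :=
  stmt5_general hX C hclopen hdisj A
end

section
/- Let X := 2^ω and A := {0^∞} × (2^ω ∖ {0^∞}). Then (i) there is no continuous countable coloring of (X,A), and (ii) every continuous f: 2^ω → 2^ω with {(0^{2i}1α, 0^{2i+1}1β) : i,α,β} ⊆ (f×f)^{-1}(A) satisfies f(0^{2i}1α) = 0^∞ for all i and α; in particular f is not injective. -/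
/-- `A := {0^∞} × (2^ω ∖ {0^∞})`. -/
def Arel : Set ((ℕ → Bool) × (ℕ → Bool)) :=
  {p | p.1 = (fun _ => false) ∧ p.2 ≠ (fun _ => false)}

open Filter Topology

theorem Continuous.exists_apply_eq_of_tendsto {X Y : Type*} [TopologicalSpace X]
    [TopologicalSpace Y] [DiscreteTopology Y] {c : X → Y} (hc : Continuous c) {u : ℕ → X}
    {x : X} (hu : Tendsto u atTop (𝓝 x)) : ∃ n, c (u n) = c x := by
  have hcu := (hc.tendsto x).comp hu
  rw [nhds_discrete, tendsto_pure] at hcu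
  exact hcu.exists

theorem tendsto_decide_eq_atTop_const_false :
    Tendsto (fun n k : ℕ => decide (k = n)) atTop (𝓝 fun _ => false) := by
  rw [tendsto_pi_nhds]
  intro k
  refine tendsto_const_nhds.congr' ?_
  filter_upwards [eventually_gt_atTop k] with n hkn
  simp [hkn.ne]

theorem decide_eq_ne_const_false (n : ℕ) : (fun k => decide (k = n)) ≠ fun _ => false :=
  fun h => by simpa using congrFun h n

theorem not_exists_continuous_coloring_Arel :
    ¬ ∃ c : (ℕ → Bool) → ℕ, Continuous c ∧ ∀ x y, (x, y) ∈ Arel → c x ≠ c y := by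
  rintro ⟨c, hc, hcol⟩
  obtain ⟨n, hn⟩ := hc.exists_apply_eq_of_tendsto tendsto_decide_eq_atTop_const_false
  exact hcol _ _ ⟨rfl, decide_eq_ne_const_false n⟩ hn.symm

theorem cat_append_singleton_apply_length (u : List Bool) (b : Bool) (γ : ℕ → Bool) :
    cat (u ++ [b]) γ u.length = b := by
  simp [cat]

theorem cat_replicate_false_append_true_injective (α : ℕ → Bool) :
    Function.Injective fun m => cat (List.replicate m false ++ [true]) α := by
  intro m m' (h : cat _ α = cat _ α)
  by_contra hm
  wlog hlt : m < m' generalizing m m'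
  · exact this h.symm (Ne.symm hm) (by omega)
  have hm_true := cat_append_singleton_apply_length (List.replicate m false) true α
  rw [List.length_replicate, h] at hm_true
  simp [cat, List.getD_eq_getElem?_getD, List.getElem?_append_left, hlt] at hm_true

theorem apply_eq_const_false_of_mapsTo_Arel {f : (ℕ → Bool) → (ℕ → Bool)}
    (hA : ∀ p ∈ A1, (f p.1, f p.2) ∈ Arel) (i : ℕ) (α : ℕ → Bool) :
    f (cat (List.replicate (2 * i) false ++ [true]) α) = fun _ => false :=
  (hA _ ⟨i, α, α, rfl⟩).1

theorem not_injective_of_mapsTo_Arel {f : (ℕ → Bool) → (ℕ → Bool)}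
    (hA : ∀ p ∈ A1, (f p.1, f p.2) ∈ Arel) : ¬ Function.Injective f := by
  intro hf
  have hzero := apply_eq_const_false_of_mapsTo_Arel hA
  have h02 : (0 : ℕ) = 2 := cat_replicate_false_append_true_injective (fun _ => false)
    (hf ((hzero 0 _).trans (hzero 1 _).symm))
  omega

/-- `(2^ω, A)` has no continuous countable coloring, and every
continuous `f` with `A₁ ⊆ (f × f)⁻¹(A)` sends each `0^{2i}1α` to `0^∞`; in
particular `f` is not injective. -/
theorem stmt7 :
    (¬ ∃ c : (ℕ → Bool) → ℕ, Continuous c ∧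
      ∀ x y, (x, y) ∈ Arel → c x ≠ c y) ∧
    (∀ f : (ℕ → Bool) → (ℕ → Bool), Continuous f →
      (∀ p ∈ A1, (f p.1, f p.2) ∈ Arel) →
      (∀ i (α : ℕ → Bool),
          f (cat (List.replicate (2 * i) false ++ [true]) α) = fun _ => false) ∧
      ¬ Function.Injective f) :=
  ⟨not_exists_continuous_coloring_Arel,
    fun _ _ hA => ⟨apply_eq_const_false_of_mapsTo_Arel hA, not_injective_of_mapsTo_Arel hA⟩⟩
end

section
/- For t ∈ ω^{<ω} define Σ^t_k := Σ_{j<k}(t(j)+2) and K_t := {α ∈ 2^ω : ∀k<|t|, (α)_{Σ^t_k} = (w_{t(k)})₀·0^{t(k)+1−|(w_{t(k)})₀|}·1·0^∞ and ∀0<i<t(k)+2, (α)_{Σ^t_k+i} = (w_{t(k)})_i·0^∞}, where w_n := s_n·0 and (α)_m is the m-th vertical slice under the pairing ⟨·,·⟩. Then for distinct n, the sets K_{t⌢n} are pairwise disjoint, each K_{t⌢n} ⊆ K_t, and each K_{t⌢n} is nowhere dense (meager) in K^{w_n(0)}_t := {α ∈ K_t : α(⟨Σ^t_{|t|},0⟩)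 = w_n(0)}. -/
/-- Triangular numbers. -/
def tri (m : ℕ) : ℕ := m * (m + 1) / 2

/-- The pairing `⟨n,p⟩ := (Σ_{k ≤ n+p} k) + p`. -/
def pairN (n p : ℕ) : ℕ := tri (n + p) + p

/-- `Σ^t_k := Σ_{j<k} (t(j) + 2)`. -/
def sigT (t : List ℕ) (k : ℕ) : ℕ := ((t.take k).map (· + 2)).sum

/-- The set `K_t ⊆ 2^ω`: for each `k < |t|`, the vertical slices numbered
`Σ^t_k, …, Σ^t_k + t(k) + 1` are prescribed: the `i`-th of them is
`(w_{t(k)})_i · 0^∞`, except that the `0`-th one additionally carries a `1`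
at position `t(k) + 1` (i.e. equals `(w_{t(k)})₀·0^{t(k)+1-|(w_{t(k)})₀|}·1·0^∞`). -/
def Kt (w : ℕ → List Bool) (t : List ℕ) : Set (ℕ → Bool) :=
  {α | ∀ k < t.length, ∀ i < t.getD k 0 + 2, ∀ p,
    α (pairN (sigT t k + i) p) =
      if i = 0 ∧ p = t.getD k 0 + 1 then true
      else (w (t.getD k 0)).getD (pairN i p) false}

/-- The clopen piece `K^ε_t := {α ∈ K_t : α(⟨Σ^t_{|t|}, 0⟩) = ε}`. -/
def Keps (w : ℕ → List Bool) (t : List ℕ) (ε : Bool) : Set (ℕ → Bool) :=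
  {α | α ∈ Kt w t ∧ α (pairN (sigT t t.length) 0) = ε}

/-!
In the slice `(α)_{Σ^t_{|t|}}` of a point of `K_{t⌢n}`, every entry beyond `|w_n| = n + 1` is `0`
except for a single `1` at position `n + 1`; reading that slice at position `max n m + 1`
separates `K_{t⌢n}` from `K_{t⌢m}`. `K_{t⌢n}` is closed, and setting a far-out entry of that
slice to `1` moves a point of `K^ε_t` out of `K_{t⌢n}` but not out of `K^ε_t`, which only
constrains the slices before `Σ^t_{|t|}` and the entry `⟨Σ^t_{|t|}, 0⟩`. Such changes are
arbitrarily small in the product topology, so `K_{t⌢n}` has empty interior in `K^ε_t`.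
-/

open Filter

theorem interior_preimage_val_eq_empty_of_forall_finset {ι X : Type*} [TopologicalSpace X]
    {A B : Set (ι → X)}
    (h : ∀ x ∈ A, ∀ I : Finset ι, ∃ y ∈ A, (∀ i ∈ I, y i = x i) ∧ y ∉ B) :
    interior ((↑) ⁻¹' B : Set A) = ∅ := by
  refine Set.eq_empty_of_forall_notMem fun x hx => ?_
  rw [mem_interior_iff_mem_nhds, nhds_subtype, mem_comap] at hx
  obtain ⟨V, hV, hVB⟩ := hx
  rw [nhds_pi, mem_pi'] at hV
  obtain ⟨I, U, hU, hUV⟩ := hV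
  obtain ⟨y, hyA, hyx, hyB⟩ := h x x.2 I
  have hyV : y ∈ V := hUV fun i hi => (hyx i hi).symm ▸ mem_of_mem_nhds (hU i)
  exact hyB (hVB hyV : (⟨y, hyA⟩ : A) ∈ (↑) ⁻¹' B)

lemma tri_succ (n : ℕ) : tri (n + 1) = tri n + n + 1 := by
  unfold tri
  have h : (n + 1) * (n + 1 + 1) = n * (n + 1) + 2 * (n + 1) := by ring
  rw [h]
  omega

lemma tri_mono : Monotone tri :=
  monotone_nat_of_le_succ fun n => by rw [tri_succ]; omega

lemma pairN_lt_pairN {a b c d : ℕ} (h : a + b < c + d) : pairN a b < pairN c d := by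
  have := tri_succ (a + b)
  have : tri (a + b + 1) ≤ tri (c + d) := tri_mono h
  unfold pairN
  omega

lemma pairN_inj {a b c d : ℕ} : pairN a b = pairN c d ↔ a = c ∧ b = d := by
  refine ⟨fun h => ?_, fun ⟨rfl, rfl⟩ => rfl⟩
  rcases lt_trichotomy (a + b) (c + d) with h' | h' | h'
  · exact absurd h (pairN_lt_pairN h').ne
  · unfold pairN at h
    rw [h'] at h
    omega
  · exact absurd h (pairN_lt_pairN h').ne'

lemma le_pairN (a b : ℕ) : b ≤ pairN a b := by
  unfold pairN
  omega

section Kt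

variable {w : ℕ → List Bool} {t : List ℕ}

lemma sigT_append (n : ℕ) {k : ℕ} (hk : k ≤ t.length) : sigT (t ++ [n]) k = sigT t k := by
  unfold sigT
  rw [List.take_append_of_le_length hk]

lemma sigT_succ {k : ℕ} (hk : k < t.length) : sigT t (k + 1) = sigT t k + (t.getD k 0 + 2) := by
  unfold sigT
  rw [List.take_add_one, List.map_append, List.sum_append]
  simp [List.getElem?_eq_getElem hk, List.getD_eq_getElem?_getD]

lemma sigT_mono (t : List ℕ) : Monotone (sigT t) :=
  monotone_nat_of_le_succ fun k => by
    unfold sigT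
    rw [List.take_add_one, List.map_append, List.sum_append]
    exact Nat.le_add_right _ _

lemma sigT_add_lt_sigT_length {k i : ℕ} (hk : k < t.length) (hi : i < t.getD k 0 + 2) :
    sigT t k + i < sigT t t.length := by
  have := sigT_succ hk
  have : sigT t (k + 1) ≤ sigT t t.length := sigT_mono t hk
  omega

lemma getD_append_of_lt (n : ℕ) {k : ℕ} (hk : k < t.length) :
    (t ++ [n]).getD k 0 = t.getD k 0 := by
  rw [List.getD_eq_getElem?_getD, List.getD_eq_getElem?_getD, List.getElem?_append_left hk]

lemma getD_append_length (n : ℕ) : (t ++ [n]).getD t.length 0 = n := by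
  rw [List.getD_eq_getElem?_getD, List.getElem?_concat_length]
  rfl

lemma isClosed_Kt : IsClosed (Kt w t) := by
  simp only [Kt, Set.ofPred_forall]
  repeat refine isClosed_iInter fun _ => ?_
  exact isClosed_eq (continuous_apply _) continuous_const

lemma Kt_append_subset (n : ℕ) : Kt w (t ++ [n]) ⊆ Kt w t := by
  intro α hα k hk i hi p
  have h := hα k (by simp; omega) i (by rwa [getD_append_of_lt n hk]) p
  rwa [getD_append_of_lt n hk, sigT_append n hk.le] at h

lemma mem_Kt_of_forall_lt_sigT_length {α β : ℕ → Bool} (hα : α ∈ Kt w t)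
    (h : ∀ a < sigT t t.length, ∀ p, β (pairN a p) = α (pairN a p)) : β ∈ Kt w t :=
  fun k hk i hi p => (h _ (sigT_add_lt_sigT_length hk hi) p).trans (hα k hk i hi p)

lemma apply_pairN_sigT_length_of_mem_Kt_append {n : ℕ} (hwn : (w n).length ≤ n + 1)
    {α : ℕ → Bool} (hα : α ∈ Kt w (t ++ [n])) {p : ℕ} (hp : n + 1 ≤ p) :
    α (pairN (sigT t t.length) p) = decide (p = n + 1) := by
  have h := hα t.length (by simp) 0 (by rw [getD_append_length]; omega) p
  rw [getD_append_length, sigT_append n le_rfl, add_zero] at h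
  rw [h]
  by_cases hpn : p = n + 1
  · simp [hpn]
  · have := le_pairN 0 p
    rw [if_neg (by omega), List.getD_eq_default _ _ (by omega)]
    simp [hpn]

lemma update_mem_Keps {ε : Bool} {α : ℕ → Bool} (hα : α ∈ Keps w t ε) {p : ℕ} (hp : p ≠ 0)
    (b : Bool) : Function.update α (pairN (sigT t t.length) p) b ∈ Keps w t ε := by
  refine ⟨mem_Kt_of_forall_lt_sigT_length hα.1 fun a ha q => ?_, ?_⟩
  · exact Function.update_of_ne (fun h => ha.ne (pairN_inj.mp h).1) _ _
  · rw [Function.update_of_ne (fun h => hp (pairN_inj.mp h).2.symm)]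
    exact hα.2

end Kt

/-- the `K_{t⌢n}` are pairwise disjoint, included in `K_t`, and each
`K_{t⌢n}` is nowhere dense in the subspace `K^{w_n(0)}_t`. -/
theorem stmt13 (w : ℕ → List Bool) (hw : ∀ n, (w n).length = n + 1) (t : List ℕ) :
    (∀ n m : ℕ, n ≠ m → Disjoint (Kt w (t ++ [n])) (Kt w (t ++ [m]))) ∧
    (∀ n : ℕ, Kt w (t ++ [n]) ⊆ Kt w t) ∧
    (∀ n : ℕ, IsNowhereDense
      ((fun x : ↥(Keps w t ((w n).getD 0 false)) => (x : ℕ → Bool)) ⁻¹'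
        Kt w (t ++ [n]))) := by
  refine ⟨fun n m hnm => Set.disjoint_left.mpr fun α hn hm => ?_, Kt_append_subset, fun n => ?_⟩
  · have h := (apply_pairN_sigT_length_of_mem_Kt_append (hw n).le hn (p := max n m + 1)
      (by omega)).symm.trans (apply_pairN_sigT_length_of_mem_Kt_append (hw m).le hm (by omega))
    simp only [decide_eq_decide] at h
    omega
  · rw [(isClosed_Kt.preimage continuous_subtype_val).isNowhereDense_iff]
    refine interior_preimage_val_eq_empty_of_forall_finset fun α hα I => ?_
    set p := I.sup id + n + 2 with hp
    refine ⟨_, update_mem_Keps hα (p := p) (by omega) true, fun i hi => ?_, fun hmem => ?_⟩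
    · have : i ≤ I.sup id := Finset.le_sup (f := id) hi
      have := le_pairN (sigT t t.length) p
      exact Function.update_of_ne (by omega) _ _
    · have := apply_pairN_sigT_length_of_mem_Kt_append (hw n).le hmem (p := p) (by omega)
      rw [Function.update_self, eq_comm, decide_eq_true_iff] at this
      omega
end
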